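/- arXiv:1608.05664 — 8 statements merged into one kernel-verified Lean document; each statement's English description precedes it below -/
import Mathlib

section
/- The equation x^(2^(2h)) + x = 1 has a solution in the finite field F_{2^m} if and only if m/h ≡ 0 (mod 4). -/
open Polynomial Finset

section Aux

variable {F : Type} [Field F] [CharP F 2]

private lemma natcast_zero_or_one (k : ℕ) : (k : F) = 0 ∨ (k : F) = 1 := by
  rcases Nat.even_or_odd k with hk | hk
  · exact Or.inl ((CharP.cast_eq_zero_iff F 2 k).mpr hk.two_dvd)
  · right
    obtain ⟨j, rfl⟩ := hk
    push_cast
    rw [show ((2:F)) = ((2:ℕ):F) by norm_num, CharP.cast_eq_zero F 2]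
    ring

private lemma cast_pow_self (k s : ℕ) : ((k : F)) ^ (2 ^ s) = (k : F) := by
  rcases natcast_zero_or_one (F := F) k with hk | hk <;> rw [hk]
  · exact zero_pow (by positivity)
  · exact one_pow _

private lemma iter_frob (t : ℕ) {x : F}
    (hx : x ^ 2 ^ t = x + 1) : ∀ k : ℕ, x ^ 2 ^ (t * k) = x + (k : F) := by
  intro k
  induction k with
  | zero => simp
  | succ k ih =>
    have h1 : x ^ 2 ^ (t * (k + 1)) = (x ^ 2 ^ (t * k)) ^ 2 ^ t := by
      rw [← pow_mul, ← pow_add, mul_add, mul_one]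
    rw [h1, ih, add_pow_char_pow, hx, cast_pow_self]
    push_cast
    ring

variable [Fintype F]

private lemma suff_aux (t r : ℕ) (ht : 2 ≤ t) (hr : r % 2 = 0) (hr0 : r ≠ 0)
    (hcF : Fintype.card F = 2 ^ (t * r)) :
    ∃ x : F, x ^ 2 ^ t + x = 1 := by
  classical
  have hfrob : ∀ (a b : F) (s : ℕ), (a + b) ^ 2 ^ s = a ^ 2 ^ s + b ^ 2 ^ s :=
    fun a b s => add_pow_char_pow a b 2 s
  have hM2 : 4 ≤ 2 ^ t := by
    calc (4:ℕ) = 2 ^ 2 := by norm_num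
    _ ≤ 2 ^ t := Nat.pow_le_pow_right (by norm_num) ht
  -- the two additive maps
  set φ : F →+ F := AddMonoidHom.mk' (fun x => x ^ 2 ^ t + x)
    (fun a b => by simp only [hfrob]; ring) with hφ
  set T : F →+ F := AddMonoidHom.mk' (fun x => ∑ k ∈ range r, x ^ 2 ^ (t * k))
    (fun a b => by simp only [hfrob]; rw [Finset.sum_add_distrib]) with hT
  have hpc : ∀ x : F, x ^ 2 ^ (t * r) = x := fun x => by
    rw [← hcF]; exact FiniteField.pow_card x
  -- range φ ⊆ ker T
  have hTφ : ∀ x : F, T (φ x) = 0 := by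
    intro x
    show ∑ k ∈ range r, (x ^ 2 ^ t + x) ^ 2 ^ (t * k) = 0
    have hterm : ∀ k, (x ^ 2 ^ t + x) ^ 2 ^ (t * k)
        = x ^ 2 ^ (t * (k + 1)) - x ^ 2 ^ (t * k) := by
      intro k
      rw [CharTwo.sub_eq_add, hfrob, ← pow_mul, ← pow_add,
        show t + t * k = t * (k + 1) by ring]
    simp only [hterm]
    rw [Finset.sum_range_sub (fun k => x ^ 2 ^ (t * k)), hpc]
    simp
  have hsub : (φ.range : Set F) ⊆ (T.ker : Set F) := by
    rintro y ⟨x, rfl⟩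
    exact AddMonoidHom.mem_ker.mpr (hTφ x)
  -- cardinalities
  have hiso : Nat.card φ.range * Nat.card φ.ker = 2 ^ (t * r) := by
    have h0 := AddSubgroup.card_eq_card_quotient_mul_card_addSubgroup φ.ker
    rw [Nat.card_congr (QuotientAddGroup.quotientKerEquivRange φ).toEquiv] at h0
    rw [← h0, Nat.card_eq_fintype_card, hcF]
  -- |ker φ| ≤ 2^t
  have hkerφ : Nat.card φ.ker ≤ 2 ^ t := by
    set p : Polynomial F := X ^ 2 ^ t - X with hp
    have hpdeg : p.natDegree = 2 ^ t := by
      rw [hp]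
      compute_degree!
      · rw [if_neg (by omega)]; simp
      · omega
    have hp0 : p ≠ 0 := fun h => by simp [h] at hpdeg; omega
    have hksub : (φ.ker : Set F) ⊆ ↑p.roots.toFinset := by
      intro x hx
      have hx' : x ^ 2 ^ t + x = 0 := hx
      have hroot : x ^ 2 ^ t = x := by
        have h2 := neg_eq_of_add_eq_zero_left hx'
        rw [CharTwo.neg_eq] at h2
        exact h2.symm
      simp only [Finset.mem_coe, Multiset.mem_toFinset]
      rw [Polynomial.mem_roots hp0]
      simp [hp, Polynomial.IsRoot, hroot]
    calc Nat.card φ.ker = (φ.ker : Set F).ncard := Nat.card_coe_set_eq _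
      _ ≤ (↑p.roots.toFinset : Set F).ncard := Set.ncard_le_ncard hksub (Set.toFinite _)
      _ = p.roots.toFinset.card := by rw [Set.ncard_coe_finset]
      _ ≤ Multiset.card p.roots := Multiset.toFinset_card_le _
      _ ≤ p.natDegree := Polynomial.card_roots' p
      _ = 2 ^ t := hpdeg
  have hrange : 2 ^ (t * (r - 1)) ≤ Nat.card φ.range := by
    have h1 : 2 ^ (t * (r - 1)) * 2 ^ t = 2 ^ (t * r) := by
      rw [← pow_add]
      congr 1
      have h2 : r - 1 + 1 = r := Nat.succ_pred_eq_of_pos (Nat.pos_of_ne_zero hr0)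
      calc t * (r - 1) + t = t * (r - 1 + 1) := by ring
        _ = t * r := by rw [h2]
    have h2 : 2 ^ (t * (r - 1)) * 2 ^ t ≤ Nat.card φ.range * 2 ^ t := by
      rw [h1, ← hiso]
      exact Nat.mul_le_mul_left _ hkerφ
    exact Nat.le_of_mul_le_mul_right h2 (by positivity)
  -- |ker T| ≤ 2^(t*(r-1))
  have hkerT : (T.ker : Set F).ncard ≤ 2 ^ (t * (r - 1)) := by
    set P : Polynomial F := ∑ k ∈ range r, X ^ 2 ^ (t * k) with hP
    have hPc : P.coeff 1 = 1 := by
      rw [hP, Polynomial.finset_sum_coeff]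
      rw [Finset.sum_eq_single_of_mem 0 (Finset.mem_range.mpr (Nat.pos_of_ne_zero hr0))]
      · simp [Polynomial.coeff_X_pow]
      · intro k _ hk0
        rw [Polynomial.coeff_X_pow, if_neg]
        have h3 : 2 ^ t ≤ 2 ^ (t * k) := Nat.pow_le_pow_right (by norm_num)
          (Nat.le_mul_of_pos_right t (Nat.pos_of_ne_zero hk0))
        omega
    have hP0 : P ≠ 0 := fun h => by simp [h] at hPc
    have hPdeg : P.natDegree ≤ 2 ^ (t * (r - 1)) := by
      rw [hP]
      apply Polynomial.natDegree_sum_le_of_forall_le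
      intro k hk
      rw [Polynomial.natDegree_X_pow]
      refine Nat.pow_le_pow_right (by norm_num) (Nat.mul_le_mul_left t ?_)
      have := Finset.mem_range.mp hk
      omega
    have hksub : (T.ker : Set F) ⊆ ↑P.roots.toFinset := by
      intro x hx
      have hx' : T x = 0 := hx
      simp only [Finset.mem_coe, Multiset.mem_toFinset]
      rw [Polynomial.mem_roots hP0]
      have hev : P.eval x = T x := by
        rw [hP, Polynomial.eval_finset_sum]
        simp only [Polynomial.eval_pow, Polynomial.eval_X]
        rfl
      simp [Polynomial.IsRoot, hev, hx']
    calc (T.ker : Set F).ncard ≤ (↑P.roots.toFinset : Set F).ncard :=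
        Set.ncard_le_ncard hksub (Set.toFinite _)
      _ = P.roots.toFinset.card := by rw [Set.ncard_coe_finset]
      _ ≤ Multiset.card P.roots := Multiset.toFinset_card_le _
      _ ≤ P.natDegree := Polynomial.card_roots' P
      _ ≤ 2 ^ (t * (r - 1)) := hPdeg
  -- conclude range φ = ker T
  have heq : (φ.range : Set F) = (T.ker : Set F) := by
    apply Set.eq_of_subset_of_ncard_le hsub
    · calc (T.ker : Set F).ncard ≤ 2 ^ (t * (r - 1)) := hkerT
        _ ≤ Nat.card φ.range := hrange
        _ = (φ.range : Set F).ncard := Nat.card_coe_set_eq _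
  -- 1 ∈ ker T
  have h1T : (1 : F) ∈ (T.ker : Set F) := by
    have hT1 : T 1 = 0 := by
      show ∑ _k ∈ range r, (1:F) ^ 2 ^ (t * _k) = 0
      simp only [one_pow, Finset.sum_const, Finset.card_range, nsmul_eq_mul, mul_one]
      exact (CharP.cast_eq_zero_iff F 2 r).mpr (Nat.dvd_of_mod_eq_zero hr)
    exact AddMonoidHom.mem_ker.mpr hT1
  rw [← heq] at h1T
  obtain ⟨x, hx⟩ := h1T
  exact ⟨x, hx⟩

end Aux

/-- The equation `x^(2^(2h)) + x = 1` has a solution in `F_{2^m}`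
iff `m/h ≡ 0 (mod 4)`, where `h` is a proper divisor of `m`. -/
theorem stmt0 (m h : ℕ) (hh : 0 < h) (hdvd : h ∣ m) (hne : h ≠ m)
    (F : Type) [Field F] [Fintype F] [Algebra (ZMod 2) F]
    (hcard : Fintype.card F = 2 ^ m) :
    (∃ x : F, x ^ (2 ^ (2 * h)) + x = 1) ↔ m / h % 4 = 0 := by
  have hchar : CharP F 2 := charP_of_injective_algebraMap (algebraMap (ZMod 2) F).injective 2
  have hm0 : m ≠ 0 := by
    rintro rfl
    have h2 : (2:ℕ) ≤ Fintype.card F := Fintype.one_lt_card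
    rw [hcard] at h2; omega
  set n := m / h with hn
  have hmn : h * n = m := Nat.mul_div_cancel' hdvd
  have hn0 : n ≠ 0 := by rintro h0; rw [h0, mul_zero] at hmn; exact hm0 hmn.symm
  constructor
  · rintro ⟨x, hx⟩
    by_contra hn4
    have hx' : x ^ 2 ^ (2 * h) = x + 1 := by
      have h2 := eq_sub_of_add_eq hx
      rwa [CharTwo.sub_eq_add, add_comm 1 x] at h2
    have hiter := iter_frob (2 * h) hx'
    have hpc : ∀ y : F, y ^ 2 ^ m = y := fun y => by
      rw [← hcard]; exact FiniteField.pow_card y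
    have hcases : n % 2 = 1 ∨ n % 4 = 2 := by omega
    rcases hcases with hc | hc
    · -- n odd : exponent 2^(2m)
      have h1 := hiter n
      have h2 : x ^ 2 ^ (2 * h * n) = x := by
        rw [show 2 * h * n = m + m by rw [mul_assoc, hmn]; ring, pow_add, pow_mul, hpc]
        exact hpc x
      have h3 : (n : F) = 1 := by
        rw [show n = 2 * (n / 2) + 1 by omega]
        push_cast
        rw [show ((2:F)) = ((2:ℕ):F) by norm_num, CharP.cast_eq_zero F 2]
        ring
      rw [h2, h3] at h1
      exact one_ne_zero (left_eq_add.mp h1)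
    · -- n ≡ 2 mod 4 : exponent 2^m
      have h1 := hiter (n / 2)
      have h2 : x ^ 2 ^ (2 * h * (n / 2)) = x := by
        rw [show 2 * h * (n / 2) = m by
          rw [mul_comm 2 h, mul_assoc, show 2 * (n/2) = n by omega, hmn]]
        exact hpc x
      have h3 : ((n / 2 : ℕ) : F) = 1 := by
        rw [show n / 2 = 2 * (n / 2 / 2) + 1 by omega]
        push_cast
        rw [show ((2:F)) = ((2:ℕ):F) by norm_num, CharP.cast_eq_zero F 2]
        ring
      rw [h2, h3] at h1
      exact one_ne_zero (left_eq_add.mp h1)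
  · intro hn4
    have hm : m = 2 * h * (n / 2) := by
      rw [mul_comm 2 h, mul_assoc, show 2 * (n/2) = n by omega, hmn]
    obtain ⟨x, hx⟩ := suff_aux (F := F) (2 * h) (n / 2) (by omega) (by omega) (by omega)
      (by rw [hcard, ← hm])
    exact ⟨x, hx⟩
end

section
/- If m/h ≡ 0 (mod 4) and x₀ ∈ F_{2^m} satisfies x₀^(2^(2h)) + x₀ = 1, then (-1)^{Tr(x₀^(2^h+1))} = (-1)^{m/4}. -/
/-- If `m/h ≡ 0 (mod 4)` and `x₀^(2^(2h)) + x₀ = 1` in `F_{2^m}`, then the absolute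
trace of `x₀^(2^h+1)` equals `m/4 mod 2` (which is `0` when `m/(4h)` is even and
`h mod 2` when `m/(4h)` is odd). -/
theorem stmt1 (m h : ℕ) (hh : 0 < h) (hdvd : h ∣ m) (hmod : m / h % 4 = 0)
    (F : Type) [Field F] [Fintype F] [Algebra (ZMod 2) F]
    (hcard : Fintype.card F = 2 ^ m)
    (x₀ : F) (hx₀ : x₀ ^ (2 ^ (2 * h)) + x₀ = 1) :
    Algebra.trace (ZMod 2) F (x₀ ^ (2 ^ h + 1)) = ((m / 4 : ℕ) : ZMod 2) := by
  classical
  have : Fact (Nat.Prime 2) := ⟨Nat.prime_two⟩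
  have hchar : CharP F 2 := charP_of_injective_algebraMap' (ZMod 2) 2
  have h2 : (2 : F) = 0 := by exact_mod_cast CharP.cast_eq_zero F 2
  have : FiniteDimensional (ZMod 2) F := by infer_instance
  -- m is positive
  have hm : 0 < m := by
    by_contra hm0
    have : m = 0 := by omega
    subst this
    have := Fintype.one_lt_card (α := F)
    omega
  -- decompose m = 4 * h * k
  obtain ⟨k, hk⟩ : ∃ k, m = 4 * h * k := by
    refine ⟨m / h / 4, ?_⟩
    have e1 : m = h * (m / h) := (Nat.mul_div_cancel' hdvd).symm
    have e2 : m / h = 4 * (m / h / 4) := by omega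
    calc m = h * (m / h) := e1
    _ = h * (4 * (m / h / 4)) := by rw [← e2]
    _ = 4 * h * (m / h / 4) := by ring
  have hm4 : m / 4 = h * k := by
    rw [hk, show 4 * h * k = 4 * (h * k) from by ring,
      Nat.mul_div_cancel_left _ (by norm_num)]
  -- finrank and Galois group card
  have hfr : Module.finrank (ZMod 2) F = m := by
    have := Module.card_eq_pow_finrank (K := ZMod 2) (V := F)
    rw [ZMod.card, hcard] at this
    exact (Nat.pow_right_injective le_rfl this.symm)
  have hcardaut : Fintype.card (F ≃ₐ[ZMod 2] F) = m := by
    rw [← Nat.card_eq_fintype_card, IsGalois.card_aut_eq_finrank, hfr]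
  -- the Frobenius automorphism
  let φ : F ≃ₐ[ZMod 2] F := AlgEquiv.ofBijective
    (AlgHom.mk (frobenius F 2) (fun r => by
      show frobenius F 2 (algebraMap (ZMod 2) F r) = algebraMap (ZMod 2) F r
      rw [frobenius_def, ← map_pow, ZMod.pow_card]))
    ((Finite.injective_iff_bijective).mp (frobenius F 2).injective)
  have hφ : ∀ x : F, φ x = x ^ 2 := fun x => rfl
  have hφpow : ∀ (i : ℕ) (x : F), (φ ^ i) x = x ^ 2 ^ i := by
    intro i
    induction i with
    | zero => intro x; simp
    | succ n ih => intro x; rw [pow_succ, AlgEquiv.mul_apply, hφ, ih, ← pow_mul, pow_succ, mul_comm]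
  have hne : ∀ d : ℕ, 0 < d → d < m → φ ^ d ≠ 1 := by
    intro d hd0 hdm heq
    have hall : ∀ x : F, x ^ 2 ^ d = x := by
      intro x
      have := congrArg (fun σ : F ≃ₐ[ZMod 2] F => σ x) heq
      simpa [hφpow] using this
    obtain ⟨g, hg⟩ := IsCyclic.exists_generator (α := Fˣ)
    have horder : orderOf g = 2 ^ m - 1 := by
      rw [orderOf_eq_card_of_forall_mem_zpowers hg, Nat.card_eq_fintype_card,
        Fintype.card_units, hcard]
    have hgpow : g ^ (2 ^ d - 1) = 1 := by
      have e1 : (g : F) ^ 2 ^ d = (g : F) := hall g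
      have e2 : g ^ 2 ^ d = g := Units.ext (by
        push_cast [Units.val_pow_eq_pow_val] at e1 ⊢; exact e1)
      have e3 : g ^ (2 ^ d - 1) * g = g := by
        rw [← pow_succ]
        have e4 : 2 ^ d - 1 + 1 = 2 ^ d := by
          have : 0 < 2 ^ d := Nat.pow_pos (by norm_num)
          omega
        rw [e4, e2]
      exact mul_right_cancel (by rw [e3, one_mul])
    have hdvd2 : orderOf g ∣ 2 ^ d - 1 := orderOf_dvd_of_pow_eq_one hgpow
    rw [horder] at hdvd2
    have hlt : (2:ℕ) ^ d < 2 ^ m := Nat.pow_lt_pow_right one_lt_two hdm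
    have hpos : 0 < 2 ^ d - 1 := by
      have : (2:ℕ) ^ 1 ≤ 2 ^ d := Nat.pow_le_pow_right (by norm_num) hd0
      omega
    have := Nat.le_of_dvd hpos hdvd2
    omega
  have hinj : ∀ i ∈ Finset.range m, ∀ j ∈ Finset.range m, φ ^ i = φ ^ j → i = j := by
    intro i hi j hj hij
    simp only [Finset.mem_range] at hi hj
    by_contra hne'
    wlog hlt : i < j generalizing i j
    · exact this j i hij.symm hj hi (Ne.symm hne') (by omega)
    have : φ ^ (j - i) = 1 := by
      have e : φ ^ i * φ ^ (j - i) = φ ^ i * 1 := by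
        rw [mul_one, ← pow_add, show i + (j - i) = j from by omega]
        exact hij.symm
      exact mul_left_cancel e
    exact hne (j - i) (by omega) (by omega) this
  have himg : (Finset.range m).image (fun i => φ ^ i) = Finset.univ := by
    apply Finset.eq_univ_of_card
    rw [Finset.card_image_of_injOn (fun a ha b hb => hinj a ha b hb), Finset.card_range, hcardaut]
  -- the element and its Frobenius orbit
  set z : F := x₀ ^ (2 ^ h + 1) with hz
  set A : ℕ → F := fun i => x₀ ^ 2 ^ i with hA
  set f : ℕ → F := fun i => A i * A (i + h) with hf
  have hx2 : x₀ ^ 2 ^ (2 * h) = x₀ + 1 := by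
    linear_combination hx₀ - x₀ * h2
  have hA2 : ∀ i, A (i + 2 * h) = A i + 1 := by
    intro i
    show x₀ ^ 2 ^ (i + 2 * h) = x₀ ^ 2 ^ i + 1
    rw [pow_add, mul_comm, pow_mul, hx2, add_pow_char_pow, one_pow]
  have hA4 : ∀ i, A (i + 4 * h) = A i := by
    intro i
    rw [show i + 4 * h = (i + 2 * h) + 2 * h from by ring, hA2, hA2, add_assoc,
      one_add_one_eq_two, h2, add_zero]
  have hblock : ∀ i, f i + f (i + h) + f (i + 2 * h) + f (i + 3 * h) = 1 := by
    intro i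
    have e1 : A (i + 2 * h) = A i + 1 := hA2 i
    have e2 : A (i + 3 * h) = A (i + h) + 1 := by
      rw [show i + 3 * h = (i + h) + 2 * h from by ring, hA2]
    have e3 : A (i + 4 * h) = A i := hA4 i
    show A i * A (i + h) + A (i+h) * A (i+h+h) + A (i+2*h) * A (i+2*h+h)
        + A (i+3*h) * A (i+3*h+h) = 1
    rw [show i + h + h = i + 2 * h from by ring, show i + 2*h + h = i + 3*h from by ring,
        show i + 3*h + h = i + 4*h from by ring, e1, e2, e3]
    set a := A i
    set b := A (i + h)
    linear_combination (2 * a * b + a + b) * h2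
  have hfper : ∀ i, f (i + 4 * h) = f i := by
    intro i
    show A (i + 4*h) * A (i + 4*h + h) = A i * A (i + h)
    rw [show i + 4*h + h = (i + h) + 4*h from by ring, hA4, hA4]
  have hfper' : ∀ (j i : ℕ), f (i + 4 * h * j) = f i := by
    intro j
    induction j with
    | zero => intro i; simp
    | succ n ih =>
      intro i
      rw [show i + 4 * h * (n+1) = (i + 4*h*n) + 4*h from by ring, hfper, ih]
  have hsum4h : ∑ i ∈ Finset.range (4 * h), f i = (h : F) := by
    rw [show 4 * h = h + h + h + h from by ring]
    rw [Finset.sum_range_add, Finset.sum_range_add, Finset.sum_range_add]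
    rw [← Finset.sum_add_distrib, ← Finset.sum_add_distrib, ← Finset.sum_add_distrib]
    have key : ∀ i ∈ Finset.range h, f i + f (h + i) + f (h + h + i) + f (h + h + h + i) = (1:F) := by
      intro i _
      rw [show h + i = i + h from by ring, show h + h + i = i + 2*h from by ring,
        show h + h + h + i = i + 3*h from by ring]
      exact hblock i
    rw [Finset.sum_congr rfl key, Finset.sum_const, Finset.card_range, nsmul_eq_mul, mul_one]
  have hsummain : ∀ j : ℕ, ∑ i ∈ Finset.range (4 * h * j), f i = ((j * h : ℕ) : F) := by
    intro j
    induction j with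
    | zero => simp
    | succ n ih =>
      rw [show 4 * h * (n+1) = 4*h*n + 4*h from by ring, Finset.sum_range_add]
      have e : ∑ i ∈ Finset.range (4*h), f (4*h*n + i) = ∑ i ∈ Finset.range (4*h), f i :=
        Finset.sum_congr rfl (fun i _ => by
          rw [show 4*h*n + i = i + 4*h*n from by ring]; exact hfper' n i)
      rw [e, hsum4h, ih]
      push_cast
      ring
  have hzf : ∀ i : ℕ, z ^ 2 ^ i = f i := by
    intro i
    show (x₀ ^ (2 ^ h + 1)) ^ 2 ^ i = x₀ ^ 2 ^ i * x₀ ^ 2 ^ (i + h)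
    rw [← pow_mul, ← pow_add]
    congr 1
    rw [pow_add]
    ring
  -- final assembly
  apply (algebraMap (ZMod 2) F).injective
  rw [trace_eq_sum_automorphisms, map_natCast]
  rw [← himg, Finset.sum_image hinj]
  calc ∑ i ∈ Finset.range m, (φ ^ i) z
      = ∑ i ∈ Finset.range m, f i := by
        exact Finset.sum_congr rfl (fun i _ => by rw [hφpow, hzf])
    _ = ((k * h : ℕ) : F) := by rw [hk]; exact hsummain k
    _ = ((m / 4 : ℕ) : F) := by rw [hm4, Nat.mul_comm]
end

section
/- If m/h is odd, then for every a ∈ F_q^*, the exponential sum Σ_{x ∈ F_q} (-1)^{Tr(a x^(2^h + 1))} equals 0. -/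
/-! Since `m / h` is odd, `gcd (m, 2h) = h`, so `gcd (2^m - 1, 2^h + 1)` divides
`gcd (2^h - 1, 2^h + 1) = 1`. Hence `x ↦ a x^(2^h+1)` permutes `F`, and the sum becomes
`∑_y (-1)^Tr(y)`, which vanishes because `Tr` is a nonzero additive character. -/

lemma sum_neg_one_pow_val_eq_zero {G : Type*} [AddGroup G] [Fintype G] {L : G →+ ZMod 2}
    (hL : L ≠ 0) : ∑ x : G, (-1 : ℤ) ^ (L x).val = 0 := by
  let ψ : AddChar G ℤ := (AddChar.zmodChar 2 (by norm_num : (-1 : ℤ) ^ 2 = 1)).compAddMonoidHom L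
  have hψ : ψ ≠ 1 := by
    obtain ⟨x, hx⟩ := DFunLike.ne_iff.mp hL
    have hx1 : L x = 1 := (Fin.exists_fin_two.mp ⟨L x, rfl⟩).resolve_left hx
    refine AddChar.ne_one_iff.mpr ⟨x, ?_⟩
    simp only [ψ, AddChar.compAddMonoidHom_apply, AddChar.zmodChar_apply, hx1]
    decide
  exact AddChar.sum_eq_zero_of_ne_one hψ

lemma Nat.coprime_two_pow_sub_one_two_pow_add_one {m h : ℕ} (hdvd : h ∣ m) (hodd : Odd (m / h)) :
    Nat.Coprime (2 ^ m - 1) (2 ^ h + 1) := by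
  -- `m / 0 = 0` is even
  have hh : h ≠ 0 := by rintro rfl; simp at hodd
  have hgcd : Nat.gcd m (2 * h) = h := by
    rw [← Nat.mul_div_cancel' hdvd, mul_comm 2, Nat.gcd_mul_left, Nat.coprime_two_right.mpr hodd,
      mul_one]
  have hsq : 2 ^ h + 1 ∣ 2 ^ (2 * h) - 1 :=
    ⟨2 ^ h - 1, by rw [pow_mul', ← one_pow 2, Nat.sq_sub_sq, one_pow]⟩
  have hcop : Nat.Coprime (2 ^ h - 1) (2 ^ h + 1) := by
    have hsum : 2 ^ h + 1 = (2 ^ h - 1) + 2 := by have := Nat.one_le_two_pow (n := h); omega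
    rw [hsum, Nat.coprime_self_add_right, Nat.coprime_two_right]
    exact Nat.Even.sub_odd Nat.one_le_two_pow ((Nat.even_pow' hh).mpr even_two) odd_one
  have hdvd_sub : Nat.gcd (2 ^ m - 1) (2 ^ h + 1) ∣ 2 ^ h - 1 := by
    have hgcd_pow := Nat.pow_sub_one_gcd_pow_sub_one 2 m (2 * h)
    rw [hgcd] at hgcd_pow
    rw [← hgcd_pow]
    exact Nat.dvd_gcd (Nat.gcd_dvd_left _ _) ((Nat.gcd_dvd_right _ _).trans hsq)
  exact Nat.eq_one_of_dvd_coprimes hcop hdvd_sub (Nat.gcd_dvd_right _ _)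

lemma pow_bijective_of_coprime_card_units {G₀ : Type*} [GroupWithZero G₀] [Finite G₀] {n : ℕ}
    (hn : n ≠ 0) (hcop : (Nat.card G₀ˣ).Coprime n) : Function.Bijective fun x : G₀ ↦ x ^ n := by
  have hsurj : Function.Surjective fun x : G₀ ↦ x ^ n := by
    intro y
    rcases eq_or_ne y 0 with rfl | hy
    · exact ⟨0, zero_pow hn⟩
    obtain ⟨u, hu⟩ := hcop.pow_left_bijective.2 (Units.mk0 y hy)
    exact ⟨u, by simpa using congrArg Units.val hu⟩
  exact ⟨Finite.injective_iff_surjective.mpr hsurj, hsurj⟩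

theorem stmt4_general (m h : ℕ) (hdvd : h ∣ m) (hodd : Odd (m / h))
    (F : Type) [Field F] [Fintype F] [Algebra (ZMod 2) F]
    (hcard : Fintype.card F = 2 ^ m) :
    ∀ a : F, a ≠ 0 →
      ∑ x : F, (-1 : ℤ) ^ (Algebra.trace (ZMod 2) F (a * x ^ (2 ^ h + 1))).val = 0 := by
  intro a ha
  have hpow : Function.Bijective fun x : F ↦ x ^ (2 ^ h + 1) := by
    refine pow_bijective_of_coprime_card_units (by positivity) ?_
    rw [Nat.card_units, Nat.card_eq_fintype_card, hcard]
    exact Nat.coprime_two_pow_sub_one_two_pow_add_one hdvd hodd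
  have hbij : Function.Bijective fun x : F ↦ a * x ^ (2 ^ h + 1) :=
    (mulLeft_bijective₀ a ha).comp hpow
  rw [Fintype.sum_bijective _ hbij _ (fun y ↦ (-1 : ℤ) ^ (Algebra.trace (ZMod 2) F y).val)
    fun _ ↦ rfl]
  refine sum_neg_one_pow_val_eq_zero (L := (Algebra.trace (ZMod 2) F).toAddMonoidHom) ?_
  exact fun h0 ↦ Algebra.trace_ne_zero (ZMod 2) F (LinearMap.toAddMonoidHom_injective h0)

/-- If `m/h` is odd, then `∑_{x ∈ F_q} (-1)^{Tr(a x^(2^h+1))} = 0` for every `a ≠ 0`. -/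
theorem stmt4 (m h : ℕ) (hh : 0 < h) (hdvd : h ∣ m) (hne : h ≠ m) (hodd : Odd (m / h))
    (F : Type) [Field F] [Fintype F] [Algebra (ZMod 2) F]
    (hcard : Fintype.card F = 2 ^ m) :
    ∀ a : F, a ≠ 0 →
      ∑ x : F, (-1 : ℤ) ^ (Algebra.trace (ZMod 2) F (a * x ^ (2 ^ h + 1))).val = 0 :=
  stmt4_general m h hdvd hodd F hcard
end

section
/- Let N(a,b) = #{x ∈ F_q : Tr(x^(2^h+1)+x) = a and Tr(bx) = 0}. Then for any b ∈ F_q^*, 4·N(a,b) = 2^m + (-1)^a (S_h(1,1) + S_h(1,b+1)). -/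
open Finset
open scoped Classical

private lemma key_prod (a u v : ZMod 2) :
    (1 + (-1:ℤ)^a.val * (-1:ℤ)^u.val) * (1 + (-1:ℤ)^v.val)
      = if u = a ∧ v = 0 then 4 else 0 := by
  revert a u v; decide

private lemma neg_one_add (u v : ZMod 2) :
    (-1:ℤ)^u.val * (-1:ℤ)^v.val = (-1:ℤ)^(u+v).val := by
  revert u v; decide

private lemma zsum (F : Type) [Field F] [Fintype F] [Algebra (ZMod 2) F]
    (c : F) (hc : c ≠ 0) :
    ∑ x : F, (-1:ℤ)^(Algebra.trace (ZMod 2) F (c*x)).val = 0 := by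
  obtain ⟨y, hy⟩ := Algebra.trace_surjective (ZMod 2) F 1
  set x₀ := c⁻¹ * y with hx₀
  have hx0 : Algebra.trace (ZMod 2) F (c * x₀) = 1 := by
    rw [hx₀, ← mul_assoc, mul_inv_cancel₀ hc, one_mul, hy]
  have hS : ∑ x : F, (-1:ℤ)^(Algebra.trace (ZMod 2) F (c*(x + x₀))).val
      = ∑ x : F, (-1:ℤ)^(Algebra.trace (ZMod 2) F (c*x)).val :=
    Equiv.sum_comp (Equiv.addRight x₀) (fun x => (-1:ℤ)^(Algebra.trace (ZMod 2) F (c*x)).val)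
  have hstep : ∀ x : F, (-1:ℤ)^(Algebra.trace (ZMod 2) F (c*(x + x₀))).val
      = -(-1:ℤ)^(Algebra.trace (ZMod 2) F (c*x)).val := by
    intro x
    rw [mul_add, map_add, hx0]
    generalize (Algebra.trace (ZMod 2) F (c*x)) = u
    revert u; decide
  simp only [hstep, Finset.sum_neg_distrib] at hS
  linarith

/-- With `N(a,b) = #{x : Tr(x^(2^h+1)+x) = a ∧ Tr(bx) = 0}`, for any `b ≠ 0`,
`4 N(a,b) = 2^m + (-1)^a (S_h(1,1) + S_h(1,b+1))`. -/
theorem stmt7 (m h : ℕ) (hm : 0 < m) (hh : 0 < h) (hdvd : h ∣ m) (hne : h ≠ m)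
    (F : Type) [Field F] [Fintype F] [Algebra (ZMod 2) F]
    (hcard : Fintype.card F = 2 ^ m) (a : ZMod 2) (b : F) (hb : b ≠ 0) :
    4 * ((univ.filter fun x : F =>
        Algebra.trace (ZMod 2) F (x ^ (2 ^ h + 1) + x) = a ∧
        Algebra.trace (ZMod 2) F (b * x) = 0).card : ℤ) =
      2 ^ m + (-1 : ℤ) ^ a.val *
        ((∑ x : F, (-1 : ℤ) ^ (Algebra.trace (ZMod 2) F (x ^ (2 ^ h + 1) + x)).val) +
         (∑ x : F, (-1 : ℤ) ^
            (Algebra.trace (ZMod 2) F (x ^ (2 ^ h + 1) + (b + 1) * x)).val)) := by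
  set Tr := Algebra.trace (ZMod 2) F with hTr
  set A : ℤ := (-1:ℤ)^a.val with hA
  -- the combined exponential sum
  have hE : ∑ x : F, (1 + A * (-1:ℤ)^(Tr (x^(2^h+1)+x)).val) * (1 + (-1:ℤ)^(Tr (b*x)).val)
      = 4 * ((univ.filter fun x : F =>
          Tr (x ^ (2 ^ h + 1) + x) = a ∧ Tr (b * x) = 0).card : ℤ) := by
    simp only [hA, key_prod]
    rw [Finset.sum_ite, Finset.sum_const, Finset.sum_const_zero, add_zero,
      nsmul_eq_mul, mul_comm]
  have hUV : ∀ x : F, (-1:ℤ)^(Tr (x^(2^h+1)+x)).val * (-1:ℤ)^(Tr (b*x)).val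
      = (-1:ℤ)^(Tr (x^(2^h+1)+(b+1)*x)).val := by
    intro x
    rw [neg_one_add, ← map_add]
    congr 1
    ring
  have hexp : ∀ x : F,
      (1 + A * (-1:ℤ)^(Tr (x^(2^h+1)+x)).val) * (1 + (-1:ℤ)^(Tr (b*x)).val)
      = 1 + (-1:ℤ)^(Tr (b*x)).val
        + (A * (-1:ℤ)^(Tr (x^(2^h+1)+x)).val
          + A * (-1:ℤ)^(Tr (x^(2^h+1)+(b+1)*x)).val) := by
    intro x
    rw [← hUV x]
    ring
  have hE2 : ∑ x : F, (1 + A * (-1:ℤ)^(Tr (x^(2^h+1)+x)).val) * (1 + (-1:ℤ)^(Tr (b*x)).val)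
      = (Fintype.card F : ℤ)
        + (∑ x : F, (-1:ℤ)^(Tr (b*x)).val)
        + A * ((∑ x : F, (-1:ℤ)^(Tr (x^(2^h+1)+x)).val)
          + (∑ x : F, (-1:ℤ)^(Tr (x^(2^h+1)+(b+1)*x)).val)) := by
    simp only [hexp, Finset.sum_add_distrib, ← Finset.mul_sum, Finset.sum_const,
      nsmul_eq_mul, mul_one, mul_add]
    rw [Finset.card_univ]
  rw [← hE, hE2, zsum F b hb, add_zero, hcard]
  push_cast
  ring
end

section
/- If 2 < m/h ≡ 2 (mod 4), then #{x ∈ F_q^* : Tr(x^(2^h+1) + x) = a} = 2^(m-1) + a - 1 for each a ∈ F_2; in particular the code C_{D_a} has length 2^(m-1) + a - 1. -/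
open Finset Function
open scoped Classical

/-
The function `f x = Tr (x ^ (2 ^ h + 1) + x)` is balanced. Write `m = 2 h w`; since
`m / h ≡ 2 (mod 4)`, `w` is odd, so the relative trace from `F` to `GF(2 ^ (2h))` of an element
of absolute trace one is an element `u` of `GF(2 ^ (2h))` with `Tr u = 1`. For such `u` the cross
terms of `f (x + u)` have cancelling traces, and `u ^ (2 ^ h + 1)` lies in `GF(2 ^ h)`, over which
`F` has even degree `m / h`, so its trace vanishes. Hence `f (x + u) = f x + 1`, and translation
by `u` swaps the two fibres of `f`.
-/

namespace Function.Periodic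

variable {M : Type*} [AddCommMonoid M] {g : ℕ → M} {c : ℕ}

theorem sum_range_mul (hg : Periodic g c) (v : ℕ) :
    ∑ i ∈ range (v * c), g i = v • ∑ i ∈ range c, g i := by
  induction v with
  | zero => simp
  | succ v ih =>
    rw [Nat.succ_mul, sum_range_add, ih, succ_nsmul]
    congr 1
    refine sum_congr rfl fun i _ => ?_
    rw [add_comm]
    exact hg.nat_mul v i

theorem sum_range_succ_eq (hg : Periodic g c) :
    ∑ i ∈ range c, g (i + 1) = ∑ i ∈ range c, g i := by
  cases c with
  | zero => simp
  | succ n => rw [sum_range_succ, sum_range_succ' g n, show g (n + 1) = g 0 by simpa using hg 0]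

end Function.Periodic

theorem periodic_pow_pow_of_pow_eq {R : Type*} [Monoid R] {p c : ℕ} {t : R}
    (ht : t ^ p ^ c = t) : Periodic (fun n => t ^ p ^ n) c := fun n => by
  simp only [pow_add, pow_mul', ht]

theorem two_mul_card_filter_eq_card_of_forall_add_eq_add_one {α : Type*} [AddGroup α] [Fintype α]
    {f : α → ZMod 2} {u : α} (hu : ∀ x, f (x + u) = f x + 1) (b : ZMod 2) :
    2 * #{x | f x = b} = Fintype.card α := by
  have hshift : #{x | f x = b} = #{x | f x = b + 1} :=
    card_equiv (Equiv.addRight u) fun x => by simp [hu]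
  have hne : ∀ c d : ZMod 2, c ≠ d ↔ c = d + 1 := by decide
  have hsplit := card_filter_add_card_filter_not (s := univ) (fun x => f x = b)
  simp only [hne, card_univ] at hsplit
  omega

section PrimeField

variable {p : ℕ} [Fact p.Prime] {F : Type*} [Field F] [Fintype F] [Algebra (ZMod p) F] {m : ℕ}

local notation "Tr" => Algebra.trace (ZMod p) F

theorem trace_pow_prime_pow (k : ℕ) (x : F) : Tr (x ^ p ^ k) = Tr x := by
  have h := Algebra.trace_eq_of_algEquiv
    (FiniteField.frobeniusAlgEquivOfAlgebraic (ZMod p) F ^ k) x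
  rwa [AlgEquiv.coe_pow, FiniteField.coe_frobeniusAlgEquivOfAlgebraic_iterate, ZMod.card] at h

theorem finrank_zmod_eq (hcard : Fintype.card F = p ^ m) : Module.finrank (ZMod p) F = m := by
  rw [Module.card_eq_pow_finrank (K := ZMod p), ZMod.card] at hcard
  exact Nat.pow_right_injective (Fact.out : p.Prime).two_le hcard

theorem algebraMap_trace_eq_sum_pow_prime_pow (hcard : Fintype.card F = p ^ m) (x : F) :
    algebraMap (ZMod p) F (Tr x) = ∑ i ∈ range m, x ^ p ^ i := by
  rw [FiniteField.algebraMap_trace_eq_sum_pow, finrank_zmod_eq hcard, Nat.card_zmod]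

theorem trace_eq_zero_of_pow_prime_pow_eq_self (hcard : Fintype.card F = p ^ m) {v h : ℕ}
    (hm : m = v * h) (hv : p ∣ v) {t : F} (ht : t ^ p ^ h = t) : Tr t = 0 := by
  apply (algebraMap (ZMod p) F).injective
  rw [algebraMap_trace_eq_sum_pow_prime_pow hcard, hm,
    (periodic_pow_pow_of_pow_eq ht).sum_range_mul, ← Nat.cast_smul_eq_nsmul (ZMod p),
    (ZMod.natCast_eq_zero_iff v p).mpr hv, zero_smul, map_zero]

theorem exists_pow_prime_pow_eq_self_trace_eq_one (hcard : Fintype.card F = p ^ m) {w c : ℕ}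
    (hm : m = w * c) (hw : ¬ p ∣ w) : ∃ u : F, u ^ p ^ c = u ∧ Tr u = 1 := by
  have := charP_of_injective_algebraMap' (ZMod p) (A := F) p
  obtain ⟨x, hx⟩ := Algebra.trace_surjective (ZMod p) F (w : ZMod p)⁻¹
  have hperiodic : Periodic (fun k => x ^ p ^ (c * k)) w := fun k => by
    have hxm : x ^ p ^ m = x := by rw [← hcard]; exact FiniteField.pow_card x
    simpa only [mul_add, mul_comm c w, ← hm] using periodic_pow_pow_of_pow_eq hxm (c * k)
  refine ⟨∑ k ∈ range w, x ^ p ^ (c * k), ?_, ?_⟩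
  · simp only [sum_pow_char_pow, ← pow_mul, ← pow_add]
    exact hperiodic.sum_range_succ_eq
  · have hw' : (w : ZMod p) ≠ 0 := by rwa [Ne, ZMod.natCast_eq_zero_iff]
    simp only [map_sum, trace_pow_prime_pow, hx, sum_const, card_range, nsmul_eq_mul,
      mul_inv_cancel₀ hw']

end PrimeField

section CharTwo

variable {F : Type*} [Field F] [Fintype F] [Algebra (ZMod 2) F] {m : ℕ}

local notation "Tr" => Algebra.trace (ZMod 2) F

theorem trace_add_pow_two_pow_add_one {h : ℕ} {u : F} (hu : u ^ 2 ^ (2 * h) = u) (x : F) :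
    Tr ((x + u) ^ (2 ^ h + 1) + (x + u)) = Tr (x ^ (2 ^ h + 1) + x) + Tr (u ^ (2 ^ h + 1) + u) := by
  have := charP_of_injective_algebraMap' (ZMod 2) (A := F) 2
  have hcross : Tr (u ^ 2 ^ h * x) = Tr (x ^ 2 ^ h * u) := by
    rw [← trace_pow_prime_pow h, mul_pow, ← pow_mul, ← pow_add, ← two_mul, hu, mul_comm]
  have hexpand : (x + u) ^ (2 ^ h + 1) + (x + u) =
      (x ^ (2 ^ h + 1) + x) + (u ^ (2 ^ h + 1) + u) + (x ^ 2 ^ h * u + u ^ 2 ^ h * x) := by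
    rw [pow_succ, add_pow_char_pow, pow_succ, pow_succ]
    ring
  rw [hexpand, map_add, map_add _ (x ^ 2 ^ h * u), hcross, CharTwo.add_self_eq_zero, add_zero,
    map_add]

theorem exists_trace_pow_two_pow_add_one_add_eq_add_one (hcard : Fintype.card F = 2 ^ m) {h : ℕ}
    (hdvd : h ∣ m) (hmod : m / h % 4 = 2) :
    ∃ u : F, ∀ x : F,
      Tr ((x + u) ^ (2 ^ h + 1) + (x + u)) = Tr (x ^ (2 ^ h + 1) + x) + 1 := by
  have hm : m = m / h * h := (Nat.div_mul_cancel hdvd).symm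
  have hm' : m = m / h / 2 * (2 * h) := by
    conv_lhs => rw [hm, show m / h = m / h / 2 * 2 by omega]
    ring
  obtain ⟨u, hu, htr⟩ := exists_pow_prime_pow_eq_self_trace_eq_one hcard hm' (by omega)
  have hnorm : (u ^ (2 ^ h + 1)) ^ 2 ^ h = u ^ (2 ^ h + 1) := by
    rw [← pow_mul, add_one_mul, ← pow_add, ← two_mul, pow_add, hu, pow_succ']
  have hnorm_tr := trace_eq_zero_of_pow_prime_pow_eq_self hcard hm (by omega) hnorm
  have hu_tr : Tr (u ^ (2 ^ h + 1) + u) = 1 := by rw [map_add, hnorm_tr, htr, zero_add]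
  exact ⟨u, fun x => by rw [trace_add_pow_two_pow_add_one hu, hu_tr]⟩

end CharTwo

theorem stmt10_general (m h : ℕ) (hdvd : h ∣ m) (hmod : m / h % 4 = 2)
    (F : Type) [Field F] [Fintype F] [Algebra (ZMod 2) F]
    (hcard : Fintype.card F = 2 ^ m) :
    ∀ a : ZMod 2,
      ((univ.filter fun x : F =>
          x ≠ 0 ∧ Algebra.trace (ZMod 2) F (x ^ (2 ^ h + 1) + x) = a).card : ℤ) =
        2 ^ (m - 1) + (a.val : ℤ) - 1 := by
  intro a
  obtain ⟨u, hu⟩ := exists_trace_pow_two_pow_add_one_add_eq_add_one hcard hdvd hmod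
  have hhalf := two_mul_card_filter_eq_card_of_forall_add_eq_add_one
    (f := fun x : F => Algebra.trace (ZMod 2) F (x ^ (2 ^ h + 1) + x)) hu a
  have hm : m ≠ 0 := by rintro rfl; simp at hmod
  rw [hcard, ← Nat.sub_add_cancel (Nat.one_le_iff_ne_zero.mpr hm), pow_succ',
    Nat.mul_left_cancel_iff two_pos] at hhalf
  have herase : (univ.filter fun x : F =>
      x ≠ 0 ∧ Algebra.trace (ZMod 2) F (x ^ (2 ^ h + 1) + x) = a) =
      (univ.filter fun x : F => Algebra.trace (ZMod 2) F (x ^ (2 ^ h + 1) + x) = a).erase 0 := by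
    ext x; simp
  rw [herase, card_erase_eq_ite, hhalf]
  obtain rfl | rfl : a = 0 ∨ a = 1 := (by decide : ∀ c : ZMod 2, c = 0 ∨ c = 1) a
  · simp [Nat.cast_sub Nat.one_le_two_pow]
  · simp [eq_comm (a := (0 : ZMod 2)), ZMod.val_one]

/-- If `2 < m/h ≡ 2 (mod 4)`, then `#{x ∈ F_q^* : Tr(x^(2^h+1)+x) = a} = 2^(m-1)+a-1`
for each `a ∈ F_2`; this is the length of the code `C_{D_a}`. -/
theorem stmt10 (m h : ℕ) (hh : 0 < h) (hdvd : h ∣ m) (hne : h ≠ m)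
    (hmod : m / h % 4 = 2) (hgt : 2 < m / h)
    (F : Type) [Field F] [Fintype F] [Algebra (ZMod 2) F]
    (hcard : Fintype.card F = 2 ^ m) :
    ∀ a : ZMod 2,
      ((univ.filter fun x : F =>
          x ≠ 0 ∧ Algebra.trace (ZMod 2) F (x ^ (2 ^ h + 1) + x) = a).card : ℤ) =
        2 ^ (m - 1) + (a.val : ℤ) - 1 :=
  stmt10_general m h hdvd hmod F hcard
end

section
/- Suppose m/h is odd. For b ∈ F_q with Tr^m_h(b) ≠ 1 (relative trace to F_{2^h}), the sum S_h(1,b) = Σ_{x ∈ F_q} (-1)^{Tr(x^(2^h+1) + bx)} equals 0. -/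
/-!
Write `Q = 2 ^ h` and `S = ∑ x, (-1) ^ Tr (x ^ (Q + 1) + b x)`. Expanding `S ^ 2` with
`y = x + w`, the cross term `x ^ Q w + x w ^ Q` has the same absolute trace as
`x ^ Q (w + w ^ Q ^ 2)`, so the sum over `x` vanishes unless `w ^ Q ^ 2 = w`; as `m / h` is odd,
this means `w ∈ 𝔽_Q`. Hence `S ^ 2 = q ∑_{w ∈ 𝔽_Q} (-1) ^ Tr ((1 + b) w)`. On `𝔽_Q` we have
`Tr ((1 + b) w) = Tr (Tr^m_h (1 + b) w)` and `Tr^m_h (1 + b) = 1 + Tr^m_h b ≠ 0`, so this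
character of `𝔽_Q` is nontrivial and the sum vanishes.
-/

open Finset

theorem pow_pow_gcd_eq_self {M : Type*} [Monoid M] {w : M} {Q a b : ℕ}
    (ha : w ^ Q ^ a = w) (hb : w ^ Q ^ b = w) : w ^ Q ^ a.gcd b = w := by
  have key : ∀ n, Function.IsPeriodicPt (· ^ Q) n w ↔ w ^ Q ^ n = w := fun n => by
    rw [Function.IsPeriodicPt, Function.IsFixedPt, pow_iterate]
  exact (key _).1 (((key a).2 ha).gcd ((key b).2 hb))

theorem pow_pow_two_eq_self_iff_of_odd {M : Type*} [Monoid M] {w : M} {Q k : ℕ} (hk : Odd k)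
    (hw : w ^ Q ^ k = w) : w ^ Q ^ 2 = w ↔ w ^ Q = w := by
  refine ⟨fun h2 => ?_, fun h1 => by rw [sq, pow_mul, h1, h1]⟩
  simpa [hk.coprime_two_left.gcd_eq_one] using pow_pow_gcd_eq_self h2 hw

namespace FiniteField

section relTrace

variable {R : Type*} [CommRing R] (p h k : ℕ)

/-- For `Nat.card F = (p ^ h) ^ k` this is the relative trace from `F` onto `𝔽_{p ^ h}`. -/
def relTrace (c : R) : R := ∑ i ∈ range k, c ^ (p ^ h) ^ i

variable {p h k}

theorem relTrace_mul_of_pow_eq_self (c : R) {w : R} (hw : w ^ p ^ h = w) :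
    relTrace p h k c * w = relTrace p h k (c * w) := by
  refine sum_mul .. |>.trans <| sum_congr rfl fun i _ => ?_
  rw [mul_pow, ← congrFun (pow_iterate _ i) w, Function.iterate_fixed (f := (· ^ p ^ h)) hw]

theorem relTrace_one : relTrace p h k (1 : R) = k := by simp [relTrace]

variable [ExpChar R p]

theorem relTrace_add (a c : R) : relTrace p h k (a + c) = relTrace p h k a + relTrace p h k c := by
  simp only [relTrace, ← sum_add_distrib]
  exact sum_congr rfl fun i _ => by rw [← pow_mul, add_pow_expChar_pow]

theorem relTrace_pow_eq_self {c : R} (hc : c ^ (p ^ h) ^ k = c) :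
    relTrace p h k c ^ p ^ h = relTrace p h k c := by
  have shift := sum_range_succ' (fun i => c ^ (p ^ h) ^ i) k
  rw [sum_range_succ, hc, pow_zero, pow_one] at shift
  rw [relTrace, ← iterateFrobenius_def, map_sum]
  refine (sum_congr rfl fun i _ => ?_).trans (add_right_cancel shift).symm
  rw [iterateFrobenius_def, ← pow_mul, ← pow_succ]

end relTrace

variable {p : ℕ} [Fact p.Prime] {F : Type*} [Field F] [Finite F] [Algebra (ZMod p) F]

theorem trace_pow_prime_pow (n : ℕ) (x : F) :
    Algebra.trace (ZMod p) F (x ^ p ^ n) = Algebra.trace (ZMod p) F x := by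
  have := Algebra.trace_eq_of_algEquiv (frobeniusAlgEquivOfAlgebraic (ZMod p) F ^ n) x
  rwa [AlgEquiv.coe_pow, coe_frobeniusAlgEquivOfAlgebraic_iterate, ZMod.card] at this

theorem trace_relTrace (h k : ℕ) (c : F) :
    Algebra.trace (ZMod p) F (relTrace p h k c) = k • Algebra.trace (ZMod p) F c := by
  simp [relTrace, ← pow_mul, trace_pow_prime_pow]

theorem trace_relTrace_mul_of_pow_eq_self {h : ℕ} (k : ℕ) (c : F) {w : F} (hw : w ^ p ^ h = w) :
    Algebra.trace (ZMod p) F (relTrace p h k c * w) = k • Algebra.trace (ZMod p) F (c * w) := by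
  rw [relTrace_mul_of_pow_eq_self c hw, trace_relTrace]

theorem exists_pow_eq_self_trace_mul_ne_zero {h k : ℕ}
    (hcard : Nat.card F = (p ^ h) ^ k) (hk : (k : ZMod p) ≠ 0) {c : F}
    (hc : relTrace p h k c ≠ 0) :
    ∃ w : F, w ^ p ^ h = w ∧ Algebra.trace (ZMod p) F (c * w) ≠ 0 := by
  have := charP_of_injective_algebraMap' (ZMod p) (A := F) p
  have : ExpChar F p := .prime Fact.out
  have := Fintype.ofFinite F
  have hfix (x : F) : x ^ (p ^ h) ^ k = x := by rw [← hcard, Nat.card_eq_fintype_card, pow_card]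
  obtain ⟨y, hy⟩ := Algebra.trace_surjective (ZMod p) F 1
  -- `k • Tr (c w) = Tr (relTrace c * w) = Tr (relTrace y) = k • Tr y = k`
  set w := (relTrace p h k c)⁻¹ * relTrace p h k y
  have hw : w ^ p ^ h = w := by
    rw [mul_pow, inv_pow, relTrace_pow_eq_self (hfix c), relTrace_pow_eq_self (hfix y)]
  refine ⟨w, hw, fun h0 => hk ?_⟩
  have key := trace_relTrace_mul_of_pow_eq_self k c hw
  rwa [h0, smul_zero, ← mul_assoc, mul_inv_cancel₀ hc, one_mul, trace_relTrace, hy,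
    Nat.smul_one_eq_cast] at key

end FiniteField

namespace AddChar

theorem sum_eq_zero_of_addSubgroup {G R : Type*} [AddGroup G] [CommRing R] [IsDomain R]
    (ψ : AddChar G R) {H : AddSubgroup G} {s : Finset G} (hs : ∀ x, x ∈ s ↔ x ∈ H)
    {a : G} (ha : a ∈ H) (hψ : ψ a ≠ 1) : ∑ x ∈ s, ψ x = 0 := by
  let := Fintype.subtype s hs
  rw [sum_subtype s hs]
  exact sum_eq_zero_of_ne_one (ψ := ψ.compAddMonoidHom H.subtype)
    (ne_one_iff.2 ⟨⟨a, ha⟩, hψ⟩)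

end AddChar

namespace FiniteField

variable (F : Type*) [Field F] [Algebra (ZMod 2) F]

instance charP_two : CharP F 2 := charP_of_injective_algebraMap' (ZMod 2) 2

noncomputable def traceChar : AddChar F ℤ where
  toFun x := (-1) ^ (Algebra.trace (ZMod 2) F x).val
  map_zero_eq_one' := by simp
  map_add_eq_mul' x y := by
    rw [map_add]
    generalize Algebra.trace (ZMod 2) F x = a
    generalize Algebra.trace (ZMod 2) F y = c
    revert a c; decide

variable {F}

theorem traceChar_apply (x : F) : traceChar F x = (-1) ^ (Algebra.trace (ZMod 2) F x).val := rfl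

theorem traceChar_eq_one_iff {x : F} : traceChar F x = 1 ↔ Algebra.trace (ZMod 2) F x = 0 := by
  rw [traceChar_apply]
  generalize Algebra.trace (ZMod 2) F x = a
  revert a; decide

theorem traceChar_congr {x y : F} (h : Algebra.trace (ZMod 2) F x = Algebra.trace (ZMod 2) F y) :
    traceChar F x = traceChar F y := by
  rw [traceChar_apply, traceChar_apply, h]

theorem isPrimitive_traceChar [Finite F] : (traceChar F).IsPrimitive := by
  intro a ha h1
  obtain ⟨y, hy⟩ := Algebra.trace_surjective (ZMod 2) F 1
  have := DFunLike.congr_fun h1 (a⁻¹ * y)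
  rw [AddChar.mulShift_apply, mul_inv_cancel_left₀ ha, AddChar.one_apply, traceChar_eq_one_iff,
    hy] at this
  exact one_ne_zero this

theorem relTrace_one_add_ne_zero {h k : ℕ} (hk : Odd k) {b : F} (hb : relTrace 2 h k b ≠ 1) :
    relTrace 2 h k (1 + b) ≠ 0 := by
  rw [relTrace_add, relTrace_one, ← map_natCast (algebraMap (ZMod 2) F),
    ZMod.natCast_eq_one_iff_odd.2 hk, map_one, Ne, CharTwo.add_eq_zero]
  exact fun h1 => hb h1.symm

variable [Fintype F]

theorem traceChar_mul_traceChar_add (b : F) (h : ℕ) (x w : F) :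
    traceChar F (x ^ (2 ^ h + 1) + b * x) * traceChar F ((x + w) ^ (2 ^ h + 1) + b * (x + w)) =
      traceChar F (w ^ (2 ^ h + 1) + b * w) * traceChar F (x ^ 2 ^ h * (w + w ^ (2 ^ h) ^ 2)) := by
  have hpoly : x ^ (2 ^ h + 1) + b * x + ((x + w) ^ (2 ^ h + 1) + b * (x + w)) =
      w ^ (2 ^ h + 1) + b * w + x ^ 2 ^ h * w + x * w ^ 2 ^ h := by
    rw [pow_succ (x + w), add_pow_char_pow]
    linear_combination (x ^ (2 ^ h + 1) + b * x) * CharTwo.two_eq_zero (R := F)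
  have htr : Algebra.trace (ZMod 2) F (x * w ^ 2 ^ h) =
      Algebra.trace (ZMod 2) F (x ^ 2 ^ h * w ^ (2 ^ h) ^ 2) := by
    rw [← trace_pow_prime_pow h, mul_pow, ← pow_mul, ← sq]
  rw [← AddChar.map_add_eq_mul, hpoly, mul_add]
  simp only [AddChar.map_add_eq_mul]
  rw [traceChar_congr htr]
  ring

theorem sum_traceChar_pow_mul [DecidableEq F] (h : ℕ) (c : F) :
    ∑ x : F, traceChar F (x ^ 2 ^ h * c) = if c = 0 then (Fintype.card F : ℤ) else 0 := by
  refine (Fintype.sum_bijective _ (bijective_iterateFrobenius F 2 h)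
    (fun x => traceChar F (x ^ 2 ^ h * c)) (fun y => traceChar F (y * c)) fun _ => rfl).trans ?_
  rw [AddChar.sum_mulShift c isPrimitive_traceChar]
  push_cast
  rfl

theorem sum_traceChar_quadratic_mul_self [DecidableEq F] (b : F) (h : ℕ) :
    (∑ x : F, traceChar F (x ^ (2 ^ h + 1) + b * x)) *
        ∑ x : F, traceChar F (x ^ (2 ^ h + 1) + b * x) =
      Fintype.card F * ∑ w ∈ univ.filter (fun w : F => w ^ (2 ^ h) ^ 2 = w),
        traceChar F (w ^ (2 ^ h + 1) + b * w) := by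
  calc _ = ∑ w : F, ∑ x : F, traceChar F (x ^ (2 ^ h + 1) + b * x) *
          traceChar F ((x + w) ^ (2 ^ h + 1) + b * (x + w)) := by
        refine (sum_mul_sum ..).trans ((sum_congr rfl fun x _ => ?_).trans sum_comm)
        exact (Equiv.sum_comp (Equiv.addLeft x) _).symm
    _ = ∑ w : F, traceChar F (w ^ (2 ^ h + 1) + b * w) *
          ∑ x : F, traceChar F (x ^ 2 ^ h * (w + w ^ (2 ^ h) ^ 2)) := by
        simp only [traceChar_mul_traceChar_add, mul_sum]
    _ = _ := by
        simp only [sum_traceChar_pow_mul, CharTwo.add_eq_zero, mul_sum, sum_filter]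
        refine sum_congr rfl fun w _ => ?_
        simp only [eq_comm (a := w)]
        split_ifs <;> ring

theorem traceChar_quadratic_of_pow_eq_self (b : F) {h : ℕ} {w : F} (hw : w ^ 2 ^ h = w) :
    traceChar F (w ^ (2 ^ h + 1) + b * w) = traceChar F ((1 + b) * w) := by
  refine traceChar_congr ?_
  have hsq := trace_pow_prime_pow (p := 2) (F := F) 1 w
  rw [pow_one] at hsq
  rw [pow_succ, hw, ← sq, add_mul, one_mul, map_add, map_add, hsq]

theorem sum_traceChar_mul_eq_zero_of_relTrace_ne_zero [DecidableEq F] {h k : ℕ}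
    (hcard : Nat.card F = (2 ^ h) ^ k) (hk : Odd k) {c : F} (hc : relTrace 2 h k c ≠ 0) :
    ∑ w ∈ univ.filter (fun w : F => w ^ 2 ^ h = w), traceChar F (c * w) = 0 := by
  obtain ⟨w₀, hw₀, htr⟩ := exists_pow_eq_self_trace_mul_ne_zero hcard
    (by rwa [Ne, ZMod.natCast_eq_zero_iff_even, Nat.not_even_iff_odd]) hc
  exact AddChar.sum_eq_zero_of_addSubgroup ((traceChar F).mulShift c)
    (H := ((iterateFrobenius F 2 h).eqLocus (RingHom.id F)).toAddSubgroup)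
    (fun w => mem_filter_univ w) hw₀ (traceChar_eq_one_iff.not.2 htr)

end FiniteField

open FiniteField

theorem stmt13_general (m h : ℕ) (hdvd : h ∣ m) (hodd : Odd (m / h))
    (F : Type) [Field F] [Fintype F] [Algebra (ZMod 2) F]
    (hcard : Fintype.card F = 2 ^ m) (b : F)
    (hb : (∑ i ∈ range (m / h), b ^ (2 ^ h) ^ i) ≠ 1) :
    ∑ x : F, (-1 : ℤ) ^ (Algebra.trace (ZMod 2) F (x ^ (2 ^ h + 1) + b * x)).val = 0 := by
  classical
  have hcard' : Nat.card F = (2 ^ h) ^ (m / h) := by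
    rw [Nat.card_eq_fintype_card, hcard, ← pow_mul, Nat.mul_div_cancel' hdvd]
  have hfix (w : F) : w ^ (2 ^ h) ^ (m / h) = w := by
    rw [← hcard', Nat.card_eq_fintype_card, pow_card]
  have hS := sum_traceChar_quadratic_mul_self b h
  rw [filter_congr fun w _ => pow_pow_two_eq_self_iff_of_odd hodd (hfix w),
    sum_congr rfl fun w hw => traceChar_quadratic_of_pow_eq_self b (mem_filter.1 hw).2,
    sum_traceChar_mul_eq_zero_of_relTrace_ne_zero hcard' hodd (relTrace_one_add_ne_zero hodd hb),
    mul_zero] at hS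
  exact mul_self_eq_zero.1 hS

/-- If `m/h` is odd and `b ∈ F_q` has relative trace `Tr^m_h(b) ≠ 1`, then
`S_h(1,b) = ∑_x (-1)^{Tr(x^(2^h+1) + b x)} = 0`. -/
theorem stmt13 (m h : ℕ) (hh : 0 < h) (hdvd : h ∣ m) (hne : h ≠ m) (hodd : Odd (m / h))
    (F : Type) [Field F] [Fintype F] [Algebra (ZMod 2) F]
    (hcard : Fintype.card F = 2 ^ m) (b : F)
    (hb : (∑ i ∈ range (m / h), b ^ (2 ^ h) ^ i) ≠ 1) :
    ∑ x : F, (-1 : ℤ) ^ (Algebra.trace (ZMod 2) F (x ^ (2 ^ h + 1) + b * x)).val = 0 :=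
  stmt13_general m h hdvd hodd F hcard b hb
end

section
/- Suppose m/h is even with m = 2e. If a ∈ F_q^* is not a (2^h+1)-th power in F_q^*, then the polynomial f(x) = a^(2^h) x^(2^(2h)) + a x is a permutation polynomial (bijection) of F_q. -/
/-- If `m/h` is even and `a ∈ F_q^*` is not a `(2^h+1)`-th power, then
`f(x) = a^(2^h) x^(2^(2h)) + a x` is a permutation of `F_q`. -/
theorem stmt14 (m e h : ℕ) (hh : 0 < h) (hdvd : h ∣ m) (hm : m = 2 * e)
    (heven : (m / h) % 2 = 0)
    (F : Type) [Field F] [Fintype F] [Algebra (ZMod 2) F]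
    (hcard : Fintype.card F = 2 ^ m)
    (a : F) (ha : a ≠ 0) (hpow : ¬∃ c : F, c ^ (2 ^ h + 1) = a) :
    Function.Bijective (fun x : F => a ^ (2 ^ h) * x ^ (2 ^ (2 * h)) + a * x) := by
  haveI := Fact.mk Nat.prime_two
  haveI hchar : CharP F 2 :=
    charP_of_injective_algebraMap (algebraMap (ZMod 2) F).injective 2
  -- kernel triviality
  have hker : ∀ x : F, a ^ (2 ^ h) * x ^ (2 ^ (2 * h)) + a * x = 0 → x = 0 := by
    intro x hx0
    by_contra hx
    have heq : a ^ (2 ^ h) * x ^ (2 ^ (2 * h)) = a * x := by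
      rw [CharTwo.add_eq_iff_eq_add, zero_add] at hx0
      exact hx0
    set y := a * x ^ (2 ^ h + 1) with hy
    have hyne : y ≠ 0 := mul_ne_zero ha (pow_ne_zero _ hx)
    have hexp : (2 ^ h + 1) * 2 ^ h = 2 ^ (2 * h) + 2 ^ h := by
      rw [add_mul, one_mul, two_mul, pow_add]
    have hyfix : y ^ (2 ^ h) = y := by
      calc y ^ (2 ^ h)
          = a ^ (2 ^ h) * x ^ (2 ^ (2 * h)) * x ^ (2 ^ h) := by
            rw [hy, mul_pow, ← pow_mul, hexp, pow_add, mul_assoc]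
        _ = a * x * x ^ (2 ^ h) := by rw [heq]
        _ = y := by rw [hy]; ring
    have hyA : y ^ (2 ^ h - 1) = 1 := by
      have h1 : y ^ (2 ^ h - 1) * y = 1 * y := by
        rw [one_mul, ← pow_succ, Nat.sub_add_cancel Nat.one_le_two_pow, hyfix]
      exact mul_right_cancel₀ hyne h1
    -- go to the unit group
    set u : Fˣ := Units.mk0 y hyne with hu
    have huA : u ^ (2 ^ h - 1) = 1 := by
      ext
      push_cast [hu]
      exact hyA
    haveI : Fintype Fˣ := Fintype.ofFinite Fˣ
    obtain ⟨ζ, hζ⟩ := IsCyclic.exists_generator (α := Fˣ)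
    have hord : orderOf ζ = Nat.card Fˣ := orderOf_eq_card_of_forall_mem_zpowers hζ
    have hcardu : Nat.card Fˣ = 2 ^ m - 1 := by
      rw [Nat.card_units, Nat.card_eq_fintype_card, hcard]
    obtain ⟨j, hj⟩ : ∃ j : ℕ, ζ ^ j = u := by
      have := hζ u
      rwa [← mem_powers_iff_mem_zpowers, Submonoid.mem_powers_iff] at this
    have hdvdj : (2 ^ m - 1) ∣ j * (2 ^ h - 1) := by
      rw [← hcardu, ← hord]
      apply orderOf_dvd_of_pow_eq_one
      rw [pow_mul, hj, huA]
    -- arithmetic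
    obtain ⟨s, hs⟩ : 2 ∣ m / h := Nat.dvd_of_mod_eq_zero heven
    have hm2 : m = 2 * h * s := by
      have h1 : m / h * h = m := Nat.div_mul_cancel hdvd
      rw [← h1, hs]; ring
    have hdvd2 : (2 ^ (2 * h) - 1) ∣ (2 ^ m - 1) := by
      have h2 := Nat.sub_dvd_pow_sub_pow (2 ^ (2 * h)) 1 s
      simpa [one_pow, ← pow_mul, ← hm2] using h2
    have hfac : 2 ^ (2 * h) - 1 = (2 ^ h + 1) * (2 ^ h - 1) := by
      have h1 : 2 ^ (2 * h) = (2 ^ h) ^ 2 := by rw [← pow_mul, mul_comm]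
      calc 2 ^ (2 * h) - 1 = (2 ^ h) ^ 2 - 1 ^ 2 := by rw [h1, one_pow]
        _ = (2 ^ h + 1) * (2 ^ h - 1) := Nat.sq_sub_sq _ _
    obtain ⟨t, ht⟩ := hdvd2
    obtain ⟨k, hk⟩ := hdvdj
    have hApos : 0 < 2 ^ h - 1 := by
      have h2 : 1 < 2 ^ h := Nat.one_lt_two_pow_iff.mpr hh.ne'
      omega
    have hj2 : j = (2 ^ h + 1) * (t * k) := by
      apply Nat.eq_of_mul_eq_mul_right hApos
      calc j * (2 ^ h - 1) = (2 ^ m - 1) * k := hk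
        _ = (2 ^ h + 1) * (2 ^ h - 1) * t * k := by rw [ht, hfac]
        _ = (2 ^ h + 1) * (t * k) * (2 ^ h - 1) := by ring
    have hzy : ((ζ : F)) ^ j = y := by
      have := congrArg (fun w : Fˣ => (w : F)) hj
      simpa [hu] using this
    apply hpow
    refine ⟨(ζ : F) ^ (t * k) * x⁻¹, ?_⟩
    calc ((ζ : F) ^ (t * k) * x⁻¹) ^ (2 ^ h + 1)
        = (ζ : F) ^ ((t * k) * (2 ^ h + 1)) * (x⁻¹) ^ (2 ^ h + 1) := by
          rw [mul_pow, ← pow_mul]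
      _ = y * (x ^ (2 ^ h + 1))⁻¹ := by
          rw [mul_comm (t * k), ← hj2, hzy, inv_pow]
      _ = a := by
          rw [hy]
          field_simp
  -- additivity
  have hadd : ∀ u v : F,
      a ^ (2 ^ h) * (u + v) ^ (2 ^ (2 * h)) + a * (u + v)
      = (a ^ (2 ^ h) * u ^ (2 ^ (2 * h)) + a * u)
        + (a ^ (2 ^ h) * v ^ (2 ^ (2 * h)) + a * v) := by
    intro u v
    rw [add_pow_char_pow]
    ring
  rw [← Finite.injective_iff_bijective]
  intro u v huv
  simp only at huv
  have h0 : a ^ (2 ^ h) * (u + v) ^ (2 ^ (2 * h)) + a * (u + v) = 0 := by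
    rw [hadd, huv]
    exact CharTwo.add_self_eq_zero _
  have h1 := hker _ h0
  rw [CharTwo.add_eq_iff_eq_add, zero_add] at h1
  exact h1
end

section
/- If m/h = 2, the code C_{D_1} with D_1 = {x ∈ F_q^* : Tr(x^(2^h+1)+x) = 1} has length 2^(m-1), dimension m, and weight enumerator 1 + (2^m - 2) x^(2^(m-2)) + x^(2^(m-1)); i.e., the codeword corresponding to b = 1 has weight 2^(m-1) and all other nonzero codewords have weight 2^(m-2). -/
/-!
Since `m = 2h`, the element `y = x ^ (2 ^ h + 1)` satisfies `y ^ (2 ^ h) = y`, so in the trace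
`Tr y = ∑_{i < 2h} y ^ (2 ^ i)` the two halves `i < h` and `i ≥ h` coincide and cancel in
characteristic 2. Hence `D_1` is the affine hyperplane `Tr x = 1`, on which every nonzero
functional `x ↦ Tr (c x)` takes the value `1` on half of `F`. For `b ∉ {0, 1}` the three
functionals `Tr x`, `Tr (b x)` and their sum `Tr ((1 - b) x)` each take the value `1` on
`2 ^ (m - 1)` points, which forces `Tr x = Tr (b x) = 1` on exactly `2 ^ (m - 2)` points.
Injectivity of `b ↦ c_b` is the nondegeneracy of the trace form, since the hyperplane `Tr x = 1`
spans `F`.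
-/

open Finset
open scoped Classical

theorem AddMonoidHom.card_fiber_mul_card_eq {G M : Type*} [AddGroup G] [Fintype G] [AddMonoid M]
    [Fintype M] [DecidableEq M] (f : G →+ M) (hf : Function.Surjective f) (y : M) :
    #{g | f g = y} * Fintype.card M = Fintype.card G := by
  rw [← card_univ (α := G),
    card_eq_sum_card_fiberwise (f := f) (s := univ) (t := univ) fun _ _ ↦ mem_univ _,
    sum_congr rfl fun z _ ↦ card_fiber_eq_of_mem_range f (hf z) (hf y), sum_const, smul_eq_mul,
    card_univ, mul_comm]

theorem LinearMap.eq_zero_of_forall_apply_eq_one {K V W : Type*} [Field K] [AddCommGroup V]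
    [Module K V] [AddCommGroup W] [Module K W] {f : V →ₗ[K] K} (hf : f ≠ 0) {φ : V →ₗ[K] W}
    (hφ : ∀ x, f x = 1 → φ x = 0) : φ = 0 := by
  obtain ⟨u, hu : f u ≠ 0⟩ := DFunLike.ne_iff.mp hf
  set v := (f u)⁻¹ • u
  have hv : f v = 1 := by simp [v, hu]
  ext z
  have hz : f (z + (1 - f z) • v) = 1 := by simp [hv]
  have := hφ _ hz
  rw [map_add, map_smul, hφ v hv, smul_zero, add_zero] at this
  simpa using this

theorem Algebra.trace_eq_zero_of_pow_card_pow_eq_self {K L : Type*} [Field K] [Field L]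
    [Finite L] [Algebra K L] [CharP L 2] {n : ℕ} (hn : Module.finrank K L = 2 * n) {y : L}
    (hy : y ^ Nat.card K ^ n = y) : Algebra.trace K L y = 0 := by
  apply FaithfulSMul.algebraMap_injective K L
  -- the Frobenius orbit sum `∑ i < 2n, y ^ q ^ i` consists of two equal halves
  have hshift : ∀ i, y ^ Nat.card K ^ (n + i) = y ^ Nat.card K ^ i := fun i ↦ by
    rw [pow_add, pow_mul, hy]
  rw [FiniteField.algebraMap_trace_eq_sum_pow, hn, two_mul, sum_range_add,
    sum_congr rfl fun i _ ↦ hshift i, CharTwo.add_self_eq_zero, map_zero]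

theorem Algebra.trace_pow_card_pow_add_one_eq_zero {K L : Type*} [Field K] [Field L]
    [Fintype L] [Algebra K L] [CharP L 2] {n : ℕ} (hn : Module.finrank K L = 2 * n) (x : L) :
    Algebra.trace K L (x ^ (Nat.card K ^ n + 1)) = 0 := by
  apply trace_eq_zero_of_pow_card_pow_eq_self hn
  have hx : x ^ (Nat.card K ^ n * Nat.card K ^ n) = x := by
    rw [← pow_add, ← two_mul, ← hn, ← Module.natCard_eq_pow_finrank, Nat.card_eq_fintype_card,
      FiniteField.pow_card]
  rw [pow_succ, mul_pow, ← pow_mul, hx, mul_comm]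

section FiniteFieldTrace

variable {K L : Type*} [Field K] [Fintype K] [Field L] [Fintype L] [Algebra K L]

theorem Algebra.trace_comp_mulLeft_ne_zero {c : L} (hc : c ≠ 0) :
    Algebra.trace K L ∘ₗ LinearMap.mulLeft K c ≠ 0 := by
  obtain ⟨u, hu : Algebra.trace K L u ≠ 0⟩ := DFunLike.ne_iff.mp (Algebra.trace_ne_zero K L)
  intro h
  apply hu
  simpa [hc] using DFunLike.congr_fun h (c⁻¹ * u)

theorem Algebra.card_filter_trace_mul_eq_mul_card [DecidableEq K] {c : L} (hc : c ≠ 0)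
    (a : K) : #{x | Algebra.trace K L (c * x) = a} * Fintype.card K = Fintype.card L :=
  (Algebra.trace K L ∘ₗ LinearMap.mulLeft K c).toAddMonoidHom.card_fiber_mul_card_eq
    (LinearMap.surjective (trace_comp_mulLeft_ne_zero (K := K) hc) :) a

variable (K) in
theorem Algebra.eq_of_trace_mul_eq_of_trace_eq_one {b b' : L}
    (h : ∀ x, Algebra.trace K L x = 1 → Algebra.trace K L (b * x) = Algebra.trace K L (b' * x)) :
    b = b' := by
  by_contra hne
  apply trace_comp_mulLeft_ne_zero (K := K) (sub_ne_zero.mpr hne)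
  refine LinearMap.eq_zero_of_forall_apply_eq_one (Algebra.trace_ne_zero K L) fun x hx ↦ ?_
  simp [sub_mul, h x hx]

end FiniteFieldTrace

theorem ZMod.two_mul_card_filter_and_add_card_filter_add {α : Type*} [Fintype α]
    (f g : α → ZMod 2) :
    2 * #{x | f x = 1 ∧ g x = 1} + #{x | f x + g x = 1} = #{x | f x = 1} + #{x | g x = 1} := by
  simp only [card_filter, mul_sum, ← sum_add_distrib]
  refine sum_congr rfl fun x _ ↦ ?_
  generalize f x = a, g x = b
  revert a b
  decide

section BinaryField

variable {F : Type*} [Field F] [Fintype F] [Algebra (ZMod 2) F]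

local notation "Tr" => Algebra.trace (ZMod 2) F

theorem two_mul_card_filter_trace_mul_eq_one {c : F} (hc : c ≠ 0) :
    2 * #{x | Tr (c * x) = 1} = Fintype.card F := by
  rw [mul_comm]
  exact Algebra.card_filter_trace_mul_eq_mul_card hc 1

theorem four_mul_card_filter_trace_eq_one_and_trace_mul_eq_one {b : F} (hb0 : b ≠ 0)
    (hb1 : b ≠ 1) : 4 * #{x | Tr x = 1 ∧ Tr (b * x) = 1} = Fintype.card F := by
  have hsum :=
    ZMod.two_mul_card_filter_and_add_card_filter_add (fun x ↦ Tr x) fun x ↦ Tr (b * x)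
  have h1 := two_mul_card_filter_trace_mul_eq_one (one_ne_zero (α := F))
  have hb := two_mul_card_filter_trace_mul_eq_one hb0
  have h1b := two_mul_card_filter_trace_mul_eq_one (sub_ne_zero.mpr hb1.symm)
  have hadd : ∀ x, Tr x + Tr (b * x) = Tr ((1 - b) * x) := fun x ↦ by
    rw [sub_mul, map_sub, one_mul, CharTwo.sub_eq_add]
  simp only [one_mul, hadd] at h1 hsum
  omega

end BinaryField

/-- If `m = 2h`, the code `C_{D_1}` with `D_1 = {x ∈ F_q^* : Tr(x^(2^h+1)+x) = 1}` has
length `2^(m-1)`, dimension `m` (the map `b ↦ c_b` is injective), the codeword for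
`b = 1` has weight `2^(m-1)`, and all other nonzero codewords have weight `2^(m-2)`. -/
theorem stmt18 (m h : ℕ) (hh : 0 < h) (hm : m = 2 * h)
    (F : Type) [Field F] [Fintype F] [Algebra (ZMod 2) F]
    (hcard : Fintype.card F = 2 ^ m)
    (D : Finset F)
    (hD : D = univ.filter fun x : F =>
      x ≠ 0 ∧ Algebra.trace (ZMod 2) F (x ^ (2 ^ h + 1) + x) = 1) :
    (D.card : ℤ) = 2 ^ (m - 1) ∧
    Function.Injective
      (fun b : F => fun x : {x : F // x ∈ D} => Algebra.trace (ZMod 2) F (b * x.1)) ∧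
    ((D.filter fun x : F => Algebra.trace (ZMod 2) F (1 * x) ≠ 0).card : ℤ) =
      2 ^ (m - 1) ∧
    (∀ b : F, b ≠ 0 → b ≠ 1 →
      ((D.filter fun x : F => Algebra.trace (ZMod 2) F (b * x) ≠ 0).card : ℤ) =
        2 ^ (m - 2)) := by
  have : CharP F 2 := charP_of_injective_algebraMap (algebraMap (ZMod 2) F).injective 2
  have hrank : Module.finrank (ZMod 2) F = 2 * h := by
    rw [← hm]
    apply Nat.pow_right_injective le_rfl
    dsimp only
    rw [← hcard, Module.card_eq_pow_finrank (K := ZMod 2), ZMod.card]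
  have htr (x : F) : Algebra.trace (ZMod 2) F (x ^ (2 ^ h + 1)) = 0 := by
    simpa using Algebra.trace_pow_card_pow_add_one_eq_zero hrank x
  have hD' : D = ({x | Algebra.trace (ZMod 2) F x = 1} : Finset F) := by
    ext x
    simp only [hD, mem_filter, mem_univ, true_and, map_add, htr, zero_add, and_iff_right_iff_imp]
    rintro hx rfl
    simp at hx
  have hne (a : ZMod 2) : a ≠ 0 ↔ a = 1 := by revert a; decide
  have hhalf : #{x | Algebra.trace (ZMod 2) F x = 1} = 2 ^ (m - 1) := by
    have := two_mul_card_filter_trace_mul_eq_one (one_ne_zero (α := F))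
    rw [hcard, show m = 1 + (m - 1) by omega, pow_add, pow_one] at this
    simpa only [one_mul] using Nat.eq_of_mul_eq_mul_left two_pos this
  refine ⟨by rw [hD']; exact_mod_cast hhalf, fun b b' hbb ↦ ?_, ?_, fun b hb0 hb1 ↦ ?_⟩
  · refine Algebra.eq_of_trace_mul_eq_of_trace_eq_one (ZMod 2) fun x hx ↦ ?_
    exact congrFun hbb ⟨x, by simp [hD', hx]⟩
  · simp only [hD', filter_filter, one_mul, hne, and_self]
    exact_mod_cast hhalf
  · have := four_mul_card_filter_trace_eq_one_and_trace_mul_eq_one hb0 hb1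
    rw [hcard, show m = 2 + (m - 2) by omega, pow_add] at this
    simp only [hD', filter_filter, hne]
    exact_mod_cast Nat.eq_of_mul_eq_mul_left four_pos this
end
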